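/- Let ψ be a probability measure on ℝ concentrated on [0,∞) with ψ((0,∞)) > 0. Then for every s ≥ 0, Σ_{j=0}^∞ ∫_{[0,s]} ψ((s−u, ∞)) ψ^{*j}(du) = 1. -/

import Mathlib

open MeasureTheory Real Filter Topology

/-- `j`-fold convolution power of a measure on ℝ, with `convPow ψ 0 = δ₀`. -/
noncomputable def convPow (ψ : Measure ℝ) : ℕ → Measure ℝ
  | 0 => Measure.dirac 0
  | (j + 1) => ((convPow ψ j).prod ψ).map (fun p => p.1 + p.2)

/-- `f(k, n, s) = Σ_{j=0}^∞ (1 − k/n)^j ∫_{[0,s]} ψ((s−u, ∞)) ψ^{*j}(du)`. -/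
noncomputable def pauseF (ψ : Measure ℝ) (k n : ℕ) (s : ℝ) : ℝ :=
  ∑' j : ℕ, (1 - (k : ℝ) / n) ^ j *
    ∫ u in Set.Icc (0 : ℝ) s, (ψ (Set.Ioi (s - u))).toReal ∂(convPow ψ j)

/-- characteristic function `φ(ξ) = ∫ e^{iξx} ψ(dx)`. -/
noncomputable def charFn (ψ : Measure ℝ) (ξ : ℝ) : ℂ :=
  ∫ x, Complex.exp (Complex.I * ξ * x) ∂ψ

/-!
Write `Sⱼ` for the `j`-th renewal time and `aⱼ = P(Sⱼ ≤ s) = ψ^{*j}((-∞, s])`. The `j`-th term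
is `P(Sⱼ ≤ s < Sⱼ₊₁) = aⱼ - aⱼ₊₁`, so the series telescopes to `a₀ = 1` as soon as `aⱼ → 0`.
The latter is a Chernoff bound: `aⱼ ≤ eˢ Lʲ` with `L = ∫ e⁻ˣ dψ`, and `L < 1` because `ψ`
charges `(0, ∞)`.
-/

open Set ENNReal

theorem ENNReal.tsum_eq_of_add_eq_of_tendsto_zero {a b : ℕ → ℝ≥0∞}
    (hab : ∀ n, b n + a (n + 1) = a n) (ha : Tendsto a atTop (𝓝 0)) : ∑' n, b n = a 0 := by
  have hpartial (n : ℕ) : ∑ i ∈ Finset.range n, b i + a n = a 0 := by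
    induction n with
    | zero => simp
    | succ n ih => rw [Finset.sum_range_succ, add_assoc, hab, ih]
  have hlim := (ENNReal.tendsto_nat_tsum b).add ha
  rw [add_zero] at hlim
  exact tendsto_nhds_unique hlim (by simp only [hpartial, tendsto_const_nhds])

namespace MeasureTheory.Measure

variable {M : Type*} [AddMonoid M] [MeasurableSpace M] [MeasurableAdd₂ M]

theorem conv_apply (μ ν : Measure M) [SFinite ν] {A : Set M} (hA : MeasurableSet A) :
    (μ ∗ ν) A = ∫⁻ u, ν ((u + ·) ⁻¹' A) ∂μ := by
  rw [conv, map_apply measurable_add hA, prod_apply (measurable_add hA)]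
  rfl

theorem conv_apply_Iic (μ ν : Measure ℝ) [SFinite ν] (s : ℝ) :
    (μ ∗ ν) (Iic s) = ∫⁻ u, ν (Iic (s - u)) ∂μ := by
  simp [conv_apply μ ν measurableSet_Iic]

theorem conv_Iio_zero_eq_zero {μ ν : Measure ℝ} [SFinite ν] (hμ : μ (Iio 0) = 0)
    (hν : ν (Iio 0) = 0) : (μ ∗ ν) (Iio 0) = 0 := by
  rw [conv_apply μ ν measurableSet_Iio, ← lintegral_zero (μ := μ)]
  refine lintegral_congr_ae ?_
  filter_upwards [measure_eq_zero_iff_ae_notMem.1 hμ] with u hu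
  refine measure_mono_null (fun x hx => ?_) hν
  simp only [mem_preimage, mem_Iio, not_lt] at hx hu ⊢
  linarith

end MeasureTheory.Measure

open MeasureTheory.Measure

theorem monotone_measure_Ioi_sub (ψ : Measure ℝ) (s : ℝ) : Monotone fun u => ψ (Ioi (s - u)) :=
  fun _ _ huv => measure_mono (Ioi_subset_Ioi (by linarith))

theorem setLIntegral_Icc_measure_Ioi_add_conv_Iic {μ ψ : Measure ℝ} [IsProbabilityMeasure ψ]
    (hμ : μ (Iio 0) = 0) (hψ : ψ (Iio 0) = 0) (s : ℝ) :
    ∫⁻ u in Icc 0 s, ψ (Ioi (s - u)) ∂μ + (μ ∗ ψ) (Iic s) = μ (Iic s) := by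
  have hIcc : μ.restrict (Icc 0 s) = μ.restrict (Iic s) := by
    rw [← Ici_inter_Iic]
    exact restrict_congr_set (inter_ae_eq_right_of_ae_eq_univ (ae_eq_univ.2 (by simpa using hμ)))
  have htail : ∫⁻ u, ψ (Iic (s - u)) ∂μ = ∫⁻ u in Iic s, ψ (Iic (s - u)) ∂μ := by
    rw [← lintegral_add_compl _ measurableSet_Iic, compl_Iic,
      setLIntegral_eq_zero measurableSet_Ioi, add_zero]
    exact fun u hu => measure_mono_null (Iic_subset_Iio.2 (by linarith [mem_Ioi.1 hu])) hψ
  rw [conv_apply_Iic, hIcc, htail, ← lintegral_add_left (monotone_measure_Ioi_sub ψ s).measurable,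
    ← setLIntegral_one]
  refine lintegral_congr fun u => ?_
  rw [← compl_Iic, add_comm, measure_add_measure_compl measurableSet_Iic, measure_univ]

theorem convPow_succ (ψ : Measure ℝ) (j : ℕ) : convPow ψ (j + 1) = convPow ψ j ∗ ψ := rfl

instance isProbabilityMeasure_convPow (ψ : Measure ℝ) [IsProbabilityMeasure ψ] (j : ℕ) :
    IsProbabilityMeasure (convPow ψ j) := by
  induction j with
  | zero => rw [convPow]; infer_instance
  | succ j _ => rw [convPow_succ]; infer_instance

theorem convPow_Iio_zero_eq_zero {ψ : Measure ℝ} [SFinite ψ] (hψ : ψ (Iio 0) = 0) (j : ℕ) :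
    convPow ψ j (Iio 0) = 0 := by
  induction j with
  | zero => simp [convPow]
  | succ j ih => exact conv_Iio_zero_eq_zero ih hψ

theorem lintegral_exp_neg_conv (μ ν : Measure ℝ) [SFinite ν] :
    ∫⁻ x, .ofReal (rexp (-x)) ∂(μ ∗ ν) =
      (∫⁻ x, .ofReal (rexp (-x)) ∂μ) * ∫⁻ x, .ofReal (rexp (-x)) ∂ν := by
  rw [lintegral_conv (by fun_prop), ← lintegral_mul_const _ (by fun_prop)]
  refine lintegral_congr fun x => ?_
  simp_rw [neg_add, Real.exp_add, ENNReal.ofReal_mul (Real.exp_nonneg _)]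
  exact lintegral_const_mul _ (by fun_prop)

theorem lintegral_exp_neg_convPow (ψ : Measure ℝ) [SFinite ψ] (j : ℕ) :
    ∫⁻ x, .ofReal (rexp (-x)) ∂(convPow ψ j) = (∫⁻ x, .ofReal (rexp (-x)) ∂ψ) ^ j := by
  induction j with
  | zero => simp [convPow]
  | succ j ih => rw [convPow_succ, lintegral_exp_neg_conv, ih, pow_succ]

theorem measure_Iic_le_exp_mul_lintegral_exp_neg (μ : Measure ℝ) (s : ℝ) :
    μ (Iic s) ≤ .ofReal (rexp s) * ∫⁻ x, .ofReal (rexp (-x)) ∂μ :=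
  calc μ (Iic s) = ∫⁻ _ in Iic s, 1 ∂μ := (setLIntegral_one _).symm
    _ ≤ ∫⁻ x in Iic s, .ofReal (rexp s) * .ofReal (rexp (-x)) ∂μ := by
      refine setLIntegral_mono (by fun_prop) fun x hx => ?_
      rw [← ENNReal.ofReal_mul (Real.exp_nonneg _), ← Real.exp_add]
      exact ENNReal.one_le_ofReal.2 (Real.one_le_exp (by linarith [mem_Iic.1 hx]))
    _ ≤ ∫⁻ x, .ofReal (rexp s) * .ofReal (rexp (-x)) ∂μ := setLIntegral_le_lintegral _ _
    _ = .ofReal (rexp s) * ∫⁻ x, .ofReal (rexp (-x)) ∂μ := lintegral_const_mul _ (by fun_prop)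

theorem lintegral_exp_neg_lt_one {ψ : Measure ℝ} [IsProbabilityMeasure ψ]
    (hψ : ψ (Iio 0) = 0) (hpos : 0 < ψ (Ioi 0)) : ∫⁻ x, .ofReal (rexp (-x)) ∂ψ < 1 := by
  have hle : (fun x => ENNReal.ofReal (rexp (-x))) ≤ᵐ[ψ] 1 := by
    filter_upwards [measure_eq_zero_iff_ae_notMem.1 hψ] with x hx
    exact ENNReal.ofReal_le_one.2 (Real.exp_le_one_iff.2 (by simpa using hx))
  calc ∫⁻ x, .ofReal (rexp (-x)) ∂ψ < ∫⁻ _, 1 ∂ψ :=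
        lintegral_strict_mono_of_ae_le_of_ae_lt_on aemeasurable_const
          (ne_top_of_le_ne_top (by simp) (lintegral_mono_ae hle)) hle hpos.ne'
          (ae_of_all _ fun x hx =>
            ENNReal.ofReal_lt_one.2 (Real.exp_lt_one_iff.2 (by simpa using hx)))
    _ = 1 := by simp

theorem tendsto_convPow_Iic_atTop_nhds_zero {ψ : Measure ℝ} [IsProbabilityMeasure ψ]
    (hψ : ψ (Iio 0) = 0) (hpos : 0 < ψ (Ioi 0)) (s : ℝ) :
    Tendsto (fun j => convPow ψ j (Iic s)) atTop (𝓝 0) := by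
  have hgeom := ENNReal.Tendsto.const_mul
    (ENNReal.tendsto_pow_atTop_nhds_zero_of_lt_one (lintegral_exp_neg_lt_one hψ hpos))
    (Or.inr (ENNReal.ofReal_ne_top (r := rexp s)))
  rw [mul_zero] at hgeom
  refine tendsto_of_tendsto_of_tendsto_of_le_of_le tendsto_const_nhds hgeom (fun _ => zero_le)
    fun j => ?_
  rw [← lintegral_exp_neg_convPow]
  exact measure_Iic_le_exp_mul_lintegral_exp_neg _ s

/-- the renewal probabilities sum to `1`:
`Σ_{j=0}^∞ ∫_{[0,s]} ψ((s−u, ∞)) ψ^{*j}(du) = 1` for every `s ≥ 0`. -/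
theorem renewal_probabilities_sum_to_one
    (ψ : Measure ℝ) [IsProbabilityMeasure ψ]
    (hsupp : ψ (Set.Iio 0) = 0) (hnontriv : 0 < ψ (Set.Ioi 0))
    (s : ℝ) (hs : 0 ≤ s) :
    ∑' j : ℕ, ∫ u in Set.Icc (0 : ℝ) s, (ψ (Set.Ioi (s - u))).toReal ∂(convPow ψ j) = 1 := by
  have hstep (j : ℕ) : ∫⁻ u in Icc 0 s, ψ (Ioi (s - u)) ∂convPow ψ j + convPow ψ (j + 1) (Iic s)
      = convPow ψ j (Iic s) :=
    setLIntegral_Icc_measure_Ioi_add_conv_Iic (convPow_Iio_zero_eq_zero hsupp j) hsupp s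
  have hfin (j : ℕ) : ∫⁻ u in Icc 0 s, ψ (Ioi (s - u)) ∂convPow ψ j ≠ ∞ :=
    ne_top_of_le_ne_top (measure_ne_top _ (Iic s)) (hstep j ▸ le_self_add)
  have hreal (j : ℕ) : ∫ u in Icc 0 s, (ψ (Ioi (s - u))).toReal ∂convPow ψ j
      = (∫⁻ u in Icc 0 s, ψ (Ioi (s - u)) ∂convPow ψ j).toReal :=
    integral_toReal (monotone_measure_Ioi_sub ψ s).measurable.aemeasurable
      (ae_of_all _ fun _ => measure_lt_top _ _)
  rw [tsum_congr hreal, ← ENNReal.tsum_toReal_eq hfin,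
    ENNReal.tsum_eq_of_add_eq_of_tendsto_zero hstep
      (tendsto_convPow_Iic_atTop_nhds_zero hsupp hnontriv s)]
  simp [convPow, hs]
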